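/- arXiv:1705.02291 — 3 statements merged into one kernel-verified Lean document; each statement's English description precedes it below -/
import Mathlib

section
/- The image utility U* is strictly concave on (0,∞): for all x_1, x_2 > 0 with x_1 ≠ x_2 and all λ ∈ (0,1), U*(λ x_1 + (1−λ) x_2) > λ U*(x_1) + (1−λ) U*(x_2). -/
open Filter Set Topology


lemma usc_exists_max {α : Type*} [TopologicalSpace α] [Nonempty α] {K : Set α} (hK : IsCompact K)
    (hne : K.Nonempty) {f : α → EReal} (hf : UpperSemicontinuousOn f K) :
    ∃ c ∈ K, ∀ d ∈ K, f d ≤ f c := by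
  set M := sSup (f '' K) with hM
  by_cases hex : ∃ a : EReal, a < M
  · haveI hni : Nonempty {a : EReal // a < M} := ⟨⟨hex.choose, hex.choose_spec⟩⟩
    set F : Filter α := ⨅ a : {a : EReal // a < M}, 𝓟 {c | c ∈ K ∧ a.1 < f c} with hF
    have hdir : Directed (· ≥ ·) (fun a : {a : EReal // a < M} => 𝓟 {c | c ∈ K ∧ a.1 < f c}) := by
      intro a b
      refine ⟨⟨max a.1 b.1, max_lt a.2 b.2⟩, ?_, ?_⟩ <;>
        · refine principal_mono.2 fun c hc => ⟨hc.1, lt_of_le_of_lt ?_ hc.2⟩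
          simp
    have hsne : ∀ a : {a : EReal // a < M}, {c | c ∈ K ∧ a.1 < f c}.Nonempty := by
      intro a
      obtain ⟨b, hb, hab⟩ := lt_sSup_iff.1 a.2
      obtain ⟨c, hc, rfl⟩ := hb
      exact ⟨c, hc, hab⟩
    haveI : F.NeBot := iInf_neBot_of_directed hdir fun a => principal_neBot_iff.2 (hsne a)
    have hmemF : ∀ a : {a : EReal // a < M}, {c | c ∈ K ∧ a.1 < f c} ∈ F :=
      fun a => (iInf_le _ a : F ≤ _) (mem_principal_self _)
    have hFK : F ≤ 𝓟 K :=
      le_trans (iInf_le _ (Classical.arbitrary _)) (principal_mono.2 fun c hc => hc.1)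
    obtain ⟨x, hxK, hx⟩ := hK hFK
    refine ⟨x, hxK, fun d hd => ?_⟩
    have hxM : M ≤ f x := by
      by_contra h
      push_neg at h
      obtain ⟨b, hb1, hb2⟩ := exists_between h
      have hev : ∀ᶠ y in 𝓝[K] x, f y < b := hf x hxK b hb1
      have h1 : {y | f y < b} ∈ 𝓝 x ⊓ F := by
        have hle : 𝓝 x ⊓ F ≤ 𝓝[K] x := inf_le_inf_left _ hFK
        exact hle hev
      have h2 : {c | c ∈ K ∧ b < f c} ∈ 𝓝 x ⊓ F := (inf_le_right : 𝓝 x ⊓ F ≤ F) (hmemF ⟨b, hb2⟩)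
      haveI : (𝓝 x ⊓ F).NeBot := hx
      obtain ⟨y, hy1, hy2⟩ := Filter.nonempty_of_mem (Filter.inter_mem h1 h2)
      exact absurd hy2.2 (not_lt.2 hy1.le)
    exact le_trans (le_sSup (mem_image_of_mem f hd)) hxM
  · push_neg at hex
    obtain ⟨c, hc⟩ := hne
    exact ⟨c, hc, fun d hd => le_trans (le_sSup (mem_image_of_mem f hd)) (le_trans (hex ⊥) bot_le)⟩

lemma chain_aux (m : ℕ) (hm : 1 ≤ m) (Ur : (Fin m → ℝ) → ℝ)
    (hmono : ∀ c : Fin m → ℝ, (∀ i, 0 < c i) → ∀ i : Fin m, ∀ t : ℝ, 0 < t →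
      Ur c < Ur (Function.update c i (c i + t)))
    (c : Fin m → ℝ) (hc : ∀ i, 0 ≤ c i) (t : ℝ) (ht : 0 < t) :
    Ur (fun i => c i + t / 2) < Ur (fun i => c i + t) := by
  set f : ℕ → (Fin m → ℝ) := fun k i => c i + (if (i : ℕ) < k then t else t / 2) with hf
  have key : ∀ k, k < m → Ur (f k) < Ur (f (k + 1)) := by
    intro k hk
    have hpos : ∀ i, 0 < f k i := by
      intro i; simp only [hf]; split <;> [linarith [hc i]; linarith [hc i]]
    have hstep := hmono (f k) hpos ⟨k, hk⟩ (t / 2) (by linarith)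
    have heq : f (k + 1) = Function.update (f k) ⟨k, hk⟩ (f k ⟨k, hk⟩ + t / 2) := by
      funext i
      rcases eq_or_ne i ⟨k, hk⟩ with rfl | hne
      · simp only [hf, Function.update_self]
        simp [Nat.lt_succ_iff]
        ring
      · have hik : (i : ℕ) ≠ k := fun h => hne (Fin.ext h)
        rw [Function.update_of_ne hne]
        simp only [hf]
        have hiff : ((i : ℕ) < k + 1) ↔ ((i : ℕ) < k) :=
          ⟨fun h => (Nat.lt_succ_iff_lt_or_eq.1 h).resolve_right hik, fun h => Nat.lt_succ_of_lt h⟩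
        by_cases hik2 : (i : ℕ) < k
        · rw [if_pos hik2, if_pos (hiff.2 hik2)]
        · rw [if_neg hik2, if_neg (fun h => hik2 (hiff.1 h))]
    rw [heq]; exact hstep
  have main : ∀ k, k ≤ m → 1 ≤ k → Ur (f 0) < Ur (f k) := by
    intro k
    induction k with
    | zero => omega
    | succ n ih =>
      intro hk _
      rcases Nat.eq_zero_or_pos n with rfl | hn
      · exact key 0 (by omega)
      · exact lt_trans (ih (by omega) hn) (key n (by omega))
  have h0 : f 0 = fun i => c i + t / 2 := by funext i; simp [hf]
  have hmf : f m = fun i => c i + t := by funext i; simp [hf, i.isLt]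
  have := main m le_rfl hm
  rwa [h0, hmf] at this

lemma bump_lemma (m : ℕ) (hm : 1 ≤ m)
    (U : (Fin m → ℝ) → EReal) (Ur : (Fin m → ℝ) → ℝ)
    (hU_ne_top : ∀ c, U c ≠ ⊤)
    (hUUr : ∀ c : Fin m → ℝ, (∀ i, 0 < c i) → U c = (Ur c : EReal))
    (hconc : ∀ c d : Fin m → ℝ, (∀ i, 0 ≤ c i) → (∀ i, 0 ≤ d i) → c ≠ d →
      U c ≠ ⊥ → U d ≠ ⊥ → ∀ l : ℝ, 0 < l → l < 1 →
      (l : EReal) * U c + ((1 - l : ℝ) : EReal) * U d < U (l • c + (1 - l) • d))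
    (hmono : ∀ c : Fin m → ℝ, (∀ i, 0 < c i) → ∀ i : Fin m, ∀ t : ℝ, 0 < t →
      Ur c < Ur (Function.update c i (c i + t)))
    (c : Fin m → ℝ) (hc : ∀ i, 0 ≤ c i) (t : ℝ) (ht : 0 < t) :
    U c < U (fun i => c i + t) := by
  have hd_pos : ∀ i, 0 < c i + t := fun i => by linarith [hc i]
  have hUd : U (fun i => c i + t) = ((Ur fun i => c i + t : ℝ) : EReal) := hUUr _ hd_pos
  by_cases hbot : U c = ⊥
  · rw [hbot, hUd]; exact bot_lt_iff_ne_bot.2 (EReal.coe_ne_bot _)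
  · obtain ⟨r, hr⟩ : ∃ r : ℝ, U c = (r : EReal) :=
      ⟨(U c).toReal, (EReal.coe_toReal (hU_ne_top c) hbot).symm⟩
    have hne : c ≠ fun i => c i + t := by
      intro h
      have := congrFun h ⟨0, hm⟩
      linarith
    have hcon := hconc c (fun i => c i + t) hc (fun i => (hd_pos i).le) hne hbot
      (by rw [hUd]; exact EReal.coe_ne_bot _) (1 / 2) (by norm_num) (by norm_num)
    have hcombo : (1 / 2 : ℝ) • c + (1 - 1 / 2 : ℝ) • (fun i => c i + t) = fun i => c i + t / 2 := by
      funext i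
      simp only [Pi.add_apply, Pi.smul_apply, smul_eq_mul]
      ring
    rw [hcombo] at hcon
    have hmid_pos : ∀ i, 0 < c i + t / 2 := fun i => by linarith [hc i]
    rw [hUUr _ hmid_pos, hUd, hr] at hcon
    have hchain := chain_aux m hm Ur hmono c hc t ht
    rw [hr, hUd]
    rw [← EReal.coe_mul, ← EReal.coe_mul, ← EReal.coe_add, EReal.coe_lt_coe_iff] at hcon
    exact EReal.coe_lt_coe_iff.2 (by linarith)

lemma usc_orthant (m : ℕ)
    (U : (Fin m → ℝ) → EReal) (Ur : (Fin m → ℝ) → ℝ)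
    (hUUr : ∀ c : Fin m → ℝ, (∀ i, 0 < c i) → U c = (Ur c : EReal))
    (hC1 : ContDiffOn ℝ 1 Ur {c : Fin m → ℝ | ∀ i, 0 < c i})
    (hbd : ∀ c : Fin m → ℝ, (∀ i, 0 ≤ c i) → ¬ (∀ i, 0 < c i) →
      U c = Filter.limsup U (nhdsWithin c ({d : Fin m → ℝ | ∀ i, 0 ≤ d i} \ {c}))) :
    UpperSemicontinuousOn U {c : Fin m → ℝ | ∀ i, 0 ≤ c i} := by
  set Q := {c : Fin m → ℝ | ∀ i, 0 ≤ c i} with hQ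
  intro c hc y hy
  by_cases hint : ∀ i, 0 < c i
  · -- interior point: U is continuous near c
    have hopen : IsOpen {c : Fin m → ℝ | ∀ i, 0 < c i} := by
      have : {c : Fin m → ℝ | ∀ i, 0 < c i} = ⋂ i, {c : Fin m → ℝ | 0 < c i} := by
        ext d; simp
      rw [this]
      exact isOpen_iInter_of_finite fun i => isOpen_lt continuous_const (continuous_apply i)
    have hmem : {c : Fin m → ℝ | ∀ i, 0 < c i} ∈ 𝓝 c := hopen.mem_nhds hint
    have hcontUr : ContinuousAt Ur c := hC1.continuousOn.continuousAt hmem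
    have hcontU : Tendsto U (𝓝 c) (𝓝 (U c)) := by
      have h1 : Tendsto (fun d => ((Ur d : ℝ) : EReal)) (𝓝 c) (𝓝 ((Ur c : ℝ) : EReal)) :=
        (continuous_coe_real_ereal.continuousAt).comp hcontUr
      rw [hUUr c hint]
      exact h1.congr' (eventually_of_mem hmem fun d hd => (hUUr d hd).symm)
    have hev : ∀ᶠ d in 𝓝 c, U d < y := hcontU (Iio_mem_nhds hy)
    exact hev.filter_mono nhdsWithin_le_nhds
  · -- boundary point: use limsup characterization
    have hlim := hbd c hc hint
    have h1 : ∀ᶠ d in 𝓝[Q \ {c}] c, U d < y :=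
      Filter.eventually_lt_of_limsup_lt (by rw [← hlim]; exact hy)
    have hsub : Q ⊆ (Q \ {c}) ∪ {c} := by
      intro d hd
      rcases eq_or_ne d c with rfl | hne
      · exact Or.inr rfl
      · exact Or.inl ⟨hd, hne⟩
    have h2 : 𝓝[Q] c ≤ 𝓝[Q \ {c}] c ⊔ pure c := by
      calc 𝓝[Q] c ≤ 𝓝[(Q \ {c}) ∪ {c}] c := nhdsWithin_mono _ hsub
        _ = 𝓝[Q \ {c}] c ⊔ 𝓝[{c}] c := nhdsWithin_union _ _ _
        _ = 𝓝[Q \ {c}] c ⊔ pure c := by rw [nhdsWithin_singleton]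
    exact (eventually_sup.2 ⟨h1, by simpa using hy⟩).filter_mono h2

lemma budget_compact (m : ℕ) (S : Fin m → ℝ) (hS : ∀ i, 0 < S i) (x : ℝ) :
    IsCompact {c : Fin m → ℝ | (∀ i, 0 ≤ c i) ∧ ∑ k, S k * c k ≤ x} := by
  have hclosed : IsClosed {c : Fin m → ℝ | (∀ i, 0 ≤ c i) ∧ ∑ k, S k * c k ≤ x} := by
    have h1 : IsClosed {c : Fin m → ℝ | ∀ i, 0 ≤ c i} := by
      have : {c : Fin m → ℝ | ∀ i, 0 ≤ c i} = ⋂ i, {c : Fin m → ℝ | 0 ≤ c i} := by ext d; simp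
      rw [this]
      exact isClosed_iInter fun i => isClosed_le continuous_const (continuous_apply i)
    have h2 : IsClosed {c : Fin m → ℝ | ∑ k, S k * c k ≤ x} :=
      isClosed_le (continuous_finset_sum _ fun k _ => continuous_const.mul (continuous_apply k))
        continuous_const
    have : {c : Fin m → ℝ | (∀ i, 0 ≤ c i) ∧ ∑ k, S k * c k ≤ x} = {c : Fin m → ℝ | ∀ i, 0 ≤ c i} ∩ {c : Fin m → ℝ | ∑ k, S k * c k ≤ x} := rfl
    rw [this]; exact h1.inter h2
  have hsubset : {c : Fin m → ℝ | (∀ i, 0 ≤ c i) ∧ ∑ k, S k * c k ≤ x} ⊆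
      Set.pi Set.univ (fun i => Set.Icc 0 (x / S i)) := by
    intro c hc i _
    refine ⟨hc.1 i, ?_⟩
    have hterm : S i * c i ≤ ∑ k, S k * c k := by
      apply Finset.single_le_sum (f := fun k => S k * c k)
      · intro k _
        exact mul_nonneg (hS k).le (hc.1 k)
      · exact Finset.mem_univ i
    have : S i * c i ≤ x := le_trans hterm hc.2
    rw [le_div_iff₀ (hS i)]
    linarith
  exact IsCompact.of_isClosed_subset (isCompact_univ_pi fun i => isCompact_Icc) hclosed hsubset

lemma exists_maximizer (m : ℕ) (hm : 1 ≤ m)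
    (S : Fin m → ℝ) (hS : ∀ i, 0 < S i)
    (U : (Fin m → ℝ) → EReal) (Ur : (Fin m → ℝ) → ℝ)
    (hU_ne_top : ∀ c, U c ≠ ⊤)
    (hUUr : ∀ c : Fin m → ℝ, (∀ i, 0 < c i) → U c = (Ur c : EReal))
    (hC1 : ContDiffOn ℝ 1 Ur {c : Fin m → ℝ | ∀ i, 0 < c i})
    (hconc : ∀ c d : Fin m → ℝ, (∀ i, 0 ≤ c i) → (∀ i, 0 ≤ d i) → c ≠ d →
      U c ≠ ⊥ → U d ≠ ⊥ → ∀ l : ℝ, 0 < l → l < 1 →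
      (l : EReal) * U c + ((1 - l : ℝ) : EReal) * U d < U (l • c + (1 - l) • d))
    (hmono : ∀ c : Fin m → ℝ, (∀ i, 0 < c i) → ∀ i : Fin m, ∀ t : ℝ, 0 < t →
      Ur c < Ur (Function.update c i (c i + t)))
    (hbd : ∀ c : Fin m → ℝ, (∀ i, 0 ≤ c i) → ¬ (∀ i, 0 < c i) →
      U c = Filter.limsup U (nhdsWithin c ({d : Fin m → ℝ | ∀ i, 0 ≤ d i} \ {c})))
    (x : ℝ) (hx : 0 < x) :
    ∃ c : Fin m → ℝ, (∀ i, 0 ≤ c i) ∧ ∑ k, S k * c k = x ∧ U c ≠ ⊥ ∧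
      sSup (U '' {c : Fin m → ℝ | (∀ i, 0 ≤ c i) ∧ ∑ k, S k * c k ≤ x}) = U c := by
  set K := {c : Fin m → ℝ | (∀ i, 0 ≤ c i) ∧ ∑ k, S k * c k ≤ x} with hK
  have hKcomp := budget_compact m S hS x
  have hKne : K.Nonempty := ⟨0, fun i => le_rfl, by simp; linarith⟩
  have husc : UpperSemicontinuousOn U K :=
    (usc_orthant m U Ur hUUr hC1 hbd).mono fun c hc => hc.1
  obtain ⟨c, hcK, hcmax⟩ := usc_exists_max hKcomp hKne husc
  have hm0 : (0:ℝ) < (m:ℝ) := by exact_mod_cast Nat.lt_of_lt_of_le Nat.zero_lt_one hm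
  set p : Fin m → ℝ := fun i => x / (2 * m * S i) with hp
  have hp_pos : ∀ i, 0 < p i := fun i => div_pos hx (mul_pos (mul_pos two_pos hm0) (hS i))
  have hpK : p ∈ K := by
    refine ⟨fun i => (hp_pos i).le, ?_⟩
    have hterm : ∀ k : Fin m, S k * p k = x / (2 * m) := by
      intro k
      have := (hS k).ne'
      simp only [hp]
      field_simp
    rw [Finset.sum_congr rfl fun k _ => hterm k, Finset.sum_const, Finset.card_univ,
      Fintype.card_fin, nsmul_eq_mul]
    have hmx : (m:ℝ) * (x / (2 * m)) = x / 2 := by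
      field_simp
    rw [hmx]
    linarith
  have hbot : U c ≠ ⊥ := by
    intro h
    have h1 := hcmax p hpK
    rw [h, hUUr p hp_pos] at h1
    exact absurd h1 (not_le.2 (bot_lt_iff_ne_bot.2 (EReal.coe_ne_bot _)))
  have hsum : ∑ k, S k * c k = x := by
    by_contra hne'
    have hlt : ∑ k, S k * c k < x := lt_of_le_of_ne hcK.2 hne'
    have hT : (0:ℝ) < ∑ k, S k :=
      Finset.sum_pos (fun k _ => hS k) ⟨⟨0, hm⟩, Finset.mem_univ _⟩
    set t := (x - ∑ k, S k * c k) / (∑ k, S k) with htdef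
    have ht : 0 < t := div_pos (by linarith) hT
    have hdK : (fun i => c i + t) ∈ K := by
      refine ⟨fun i => ?_, ?_⟩
      · show 0 ≤ c i + t
        have := hcK.1 i
        linarith
      have : ∑ k, S k * (c k + t) = (∑ k, S k * c k) + (∑ k, S k) * t := by
        rw [Finset.sum_mul, ← Finset.sum_add_distrib]
        apply Finset.sum_congr rfl
        intros; ring
      rw [this, htdef, mul_div_cancel₀ _ hT.ne']
      linarith
    have hb := bump_lemma m hm U Ur hU_ne_top hUUr hconc hmono c hcK.1 t ht
    exact absurd (hcmax _ hdK) (not_le.2 hb)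
  refine ⟨c, hcK.1, hsum, hbot, le_antisymm (sSup_le ?_) (le_sSup (mem_image_of_mem U hcK))⟩
  rintro _ ⟨d, hd, rfl⟩
  exact hcmax d hd

theorem stmt2
    (m : ℕ) (hm : 1 ≤ m)
    (S : Fin m → ℝ) (hS : ∀ i, 0 < S i)
    (U : (Fin m → ℝ) → EReal) (Ur : (Fin m → ℝ) → ℝ)
    (hU_ne_top : ∀ c, U c ≠ ⊤)
    (hUUr : ∀ c : Fin m → ℝ, (∀ i, 0 < c i) → U c = (Ur c : EReal))
    (hC1 : ContDiffOn ℝ 1 Ur {c : Fin m → ℝ | ∀ i, 0 < c i})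
    (hconc : ∀ c d : Fin m → ℝ, (∀ i, 0 ≤ c i) → (∀ i, 0 ≤ d i) → c ≠ d →
      U c ≠ ⊥ → U d ≠ ⊥ → ∀ l : ℝ, 0 < l → l < 1 →
      (l : EReal) * U c + ((1 - l : ℝ) : EReal) * U d < U (l • c + (1 - l) • d))
    (hmono : ∀ c : Fin m → ℝ, (∀ i, 0 < c i) → ∀ i : Fin m, ∀ t : ℝ, 0 < t →
      Ur c < Ur (Function.update c i (c i + t)))
    (hInada0 : ∀ i : Fin m, ∀ c : Fin m → ℝ, (∀ j, 0 < c j) →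
      Tendsto (fun t : ℝ => fderiv ℝ Ur (Function.update c i t) (Pi.single i 1))
        (nhdsWithin 0 (Ioi 0)) atTop)
    (hInadaInf : ∀ i : Fin m, ∀ c : Fin m → ℝ, (∀ j, 0 < c j) →
      Tendsto (fun t : ℝ => fderiv ℝ Ur (Function.update c i t) (Pi.single i 1))
        atTop (nhds 0))
    (hbd : ∀ c : Fin m → ℝ, (∀ i, 0 ≤ c i) → ¬ (∀ i, 0 < c i) →
      U c = Filter.limsup U (nhdsWithin c ({d : Fin m → ℝ | ∀ i, 0 ≤ d i} \ {c})))
    (B : ℝ → Set (Fin m → ℝ))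
    (hB : ∀ x : ℝ, B x = {c | (∀ i, 0 ≤ c i) ∧ ∑ k, S k * c k ≤ x})
    (Ustar : ℝ → EReal) (hUstar : ∀ x : ℝ, Ustar x = sSup (U '' B x)) :
    ∀ x₁ x₂ : ℝ, 0 < x₁ → 0 < x₂ → x₁ ≠ x₂ → ∀ l : ℝ, 0 < l → l < 1 →
      (l : EReal) * Ustar x₁ + ((1 - l : ℝ) : EReal) * Ustar x₂ < Ustar (l * x₁ + (1 - l) * x₂) := by
  intro x₁ x₂ hx₁ hx₂ hne l hl0 hl1
  obtain ⟨c₁, h0₁, hsum₁, hb₁, hsSup₁⟩ := exists_maximizer m hm S hS U Ur hU_ne_top hUUr hC1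
    hconc hmono hbd x₁ hx₁
  obtain ⟨c₂, h0₂, hsum₂, hb₂, hsSup₂⟩ := exists_maximizer m hm S hS U Ur hU_ne_top hUUr hC1
    hconc hmono hbd x₂ hx₂
  have hcc : c₁ ≠ c₂ := by
    intro h
    apply hne
    rw [← hsum₁, h, hsum₂]
  have hcon := hconc c₁ c₂ h0₁ h0₂ hcc hb₁ hb₂ l hl0 hl1
  have hcomboK : (l • c₁ + (1 - l) • c₂) ∈
      {c : Fin m → ℝ | (∀ i, 0 ≤ c i) ∧ ∑ k, S k * c k ≤ l * x₁ + (1 - l) * x₂} := by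
    constructor
    · intro i
      simp only [Pi.add_apply, Pi.smul_apply, smul_eq_mul]
      have := h0₁ i; have := h0₂ i
      nlinarith
    · have : ∑ k, S k * (l • c₁ + (1 - l) • c₂) k
          = l * (∑ k, S k * c₁ k) + (1 - l) * (∑ k, S k * c₂ k) := by
        rw [Finset.mul_sum, Finset.mul_sum, ← Finset.sum_add_distrib]
        apply Finset.sum_congr rfl
        intro k _
        simp only [Pi.add_apply, Pi.smul_apply, smul_eq_mul]
        ring
      rw [this, hsum₁, hsum₂]
  rw [hUstar x₁, hUstar x₂, hUstar (l * x₁ + (1 - l) * x₂), hB x₁, hB x₂, hB _,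
    hsSup₁, hsSup₂]
  exact lt_of_lt_of_le hcon (le_sSup (mem_image_of_mem U hcomboK))
end

section
/- The image utility U* is right-continuous at 0 (i.e., it is a closed concave function): lim_{z↓0} U*(z) = U*(0) = U(0,…,0), where the limit and the values are taken in ℝ ∪ {−∞}. -/
open Filter Set Topology

theorem stmt8
    (m : ℕ) (hm : 1 ≤ m)
    (S : Fin m → ℝ) (hS : ∀ i, 0 < S i)
    (U : (Fin m → ℝ) → EReal) (Ur : (Fin m → ℝ) → ℝ)
    (hU_ne_top : ∀ c, U c ≠ ⊤)
    (hUUr : ∀ c : Fin m → ℝ, (∀ i, 0 < c i) → U c = (Ur c : EReal))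
    (hC1 : ContDiffOn ℝ 1 Ur {c : Fin m → ℝ | ∀ i, 0 < c i})
    (hconc : ∀ c d : Fin m → ℝ, (∀ i, 0 ≤ c i) → (∀ i, 0 ≤ d i) → c ≠ d →
      U c ≠ ⊥ → U d ≠ ⊥ → ∀ l : ℝ, 0 < l → l < 1 →
      (l : EReal) * U c + ((1 - l : ℝ) : EReal) * U d < U (l • c + (1 - l) • d))
    (hmono : ∀ c : Fin m → ℝ, (∀ i, 0 < c i) → ∀ i : Fin m, ∀ t : ℝ, 0 < t →
      Ur c < Ur (Function.update c i (c i + t)))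
    (hInada0 : ∀ i : Fin m, ∀ c : Fin m → ℝ, (∀ j, 0 < c j) →
      Tendsto (fun t : ℝ => fderiv ℝ Ur (Function.update c i t) (Pi.single i 1))
        (nhdsWithin 0 (Ioi 0)) atTop)
    (hInadaInf : ∀ i : Fin m, ∀ c : Fin m → ℝ, (∀ j, 0 < c j) →
      Tendsto (fun t : ℝ => fderiv ℝ Ur (Function.update c i t) (Pi.single i 1))
        atTop (nhds 0))
    (hbd : ∀ c : Fin m → ℝ, (∀ i, 0 ≤ c i) → ¬ (∀ i, 0 < c i) →
      U c = Filter.limsup U (nhdsWithin c ({d : Fin m → ℝ | ∀ i, 0 ≤ d i} \ {c})))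
    (B : ℝ → Set (Fin m → ℝ))
    (hB : ∀ x : ℝ, B x = {c | (∀ i, 0 ≤ c i) ∧ ∑ k, S k * c k ≤ x})
    (Ustar : ℝ → EReal) (hUstar : ∀ x : ℝ, Ustar x = sSup (U '' B x)) :
    Tendsto Ustar (nhdsWithin 0 (Ioi 0)) (nhds (Ustar 0)) ∧ Ustar 0 = U (fun _ => 0) := by
  haveI hmne : Nonempty (Fin m) := ⟨⟨0, hm⟩⟩
  have hB0 : B 0 = {(fun _ => 0 : Fin m → ℝ)} := by
    rw [hB]
    ext c
    simp only [Set.mem_setOf_eq, Set.mem_singleton_iff]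
    constructor
    · rintro ⟨hc, hsum⟩
      funext i
      by_contra h
      have hci : 0 < c i := lt_of_le_of_ne (hc i) (Ne.symm h)
      have hpos : 0 < ∑ k, S k * c k := by
        apply Finset.sum_pos'
        · intro k _; exact mul_nonneg (hS k).le (hc k)
        · exact ⟨i, Finset.mem_univ i, mul_pos (hS i) hci⟩
      linarith
    · rintro rfl
      exact ⟨fun i => le_refl 0, by simp⟩
  have hU0 : Ustar 0 = U (fun _ => 0) := by
    rw [hUstar, hB0, Set.image_singleton, sSup_singleton]
  have hlow : ∀ x : ℝ, 0 ≤ x → U (fun _ => 0) ≤ Ustar x := by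
    intro x hx
    rw [hUstar]
    apply le_sSup
    exact ⟨_, by rw [hB]; exact ⟨fun i => le_refl 0, by simpa using hx⟩, rfl⟩
  have hbd0 := hbd (fun _ => 0) (fun i => le_refl 0)
    (by intro h; exact lt_irrefl (0:ℝ) (h ⟨0, hm⟩))
  refine ⟨?_, hU0⟩
  rw [tendsto_order]
  constructor
  · intro a ha
    filter_upwards [self_mem_nhdsWithin] with x hx
    exact lt_of_lt_of_le ha (hU0 ▸ hlow x (le_of_lt hx))
  · intro b hb
    obtain ⟨b', hb1, hb2⟩ := exists_between hb
    have hls : limsup U (nhdsWithin (fun _ => 0 : Fin m → ℝ)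
        ({d : Fin m → ℝ | ∀ i, 0 ≤ d i} \ {fun _ => 0})) < b' := by
      rw [← hbd0, ← hU0]; exact hb1
    have hev := eventually_lt_of_limsup_lt hls
    rw [eventually_nhdsWithin_iff, Metric.eventually_nhds_iff] at hev
    obtain ⟨ε, hε, hball⟩ := hev
    set σ := Finset.univ.inf' Finset.univ_nonempty S with hσ
    have hσpos : 0 < σ := by
      rw [hσ, Finset.lt_inf'_iff]
      intro i _; exact hS i
    have hσle : ∀ i, σ ≤ S i := fun i => Finset.inf'_le S (Finset.mem_univ i)
    filter_upwards [Ioo_mem_nhdsGT_of_mem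
      (⟨le_refl 0, by positivity⟩ : (0:ℝ) ∈ Ico 0 (ε * σ))] with x hx
    rw [hUstar]
    refine lt_of_le_of_lt (sSup_le ?_) hb2
    rintro y ⟨c, hc, rfl⟩
    rw [hB] at hc
    obtain ⟨hcn, hcs⟩ := hc
    by_cases h0 : c = fun _ => 0
    · subst h0
      exact le_of_lt (hU0 ▸ hb1)
    · refine le_of_lt (hball ?_ ⟨hcn, h0⟩)
      rw [dist_pi_lt_iff hε]
      intro i
      have h1 : S i * c i ≤ ∑ k, S k * c k :=
        Finset.single_le_sum (f := fun k => S k * c k)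
          (fun k _ => mul_nonneg (hS k).le (hcn k)) (Finset.mem_univ i)
      have h2 : S i * c i < ε * S i := by
        have : x < ε * S i := lt_of_lt_of_le hx.2 (by
          have := hσle i; nlinarith)
        linarith [hcs]
      have h3 : c i < ε := by nlinarith [hS i]
      rw [Real.dist_eq]
      rw [abs_of_nonneg (by simpa using hcn i)]
      simpa using h3
end

section
/- For every y > 0, the convex conjugate of the image utility U* equals the sum of the convex conjugates of the individual utilities evaluated at the price-scaled argument: sup_{z>0} ( U*(z) − z·y ) = Σ_{i=1}^m sup_{c>0} ( U^i(c) − c·S_i·y ). -/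
open Filter Set Topology

private lemma ereal_coe_sum' {α : Type*} (s : Finset α) (f : α → ℝ) :
    ((∑ i ∈ s, f i : ℝ) : EReal) = ∑ i ∈ s, ((f i : ℝ) : EReal) := by
  induction s using Finset.cons_induction with
  | empty => simp
  | cons a s ha ih => rw [Finset.sum_cons, Finset.sum_cons, EReal.coe_add, ih]

private lemma tangent_le' {f : ℝ → ℝ} {f't : ℝ} (hc : ConcaveOn ℝ (Set.Ioi 0) f) {t c : ℝ}
    (ht : 0 < t) (hcpos : 0 < c) (hd : HasDerivAt f f't t) :
    f c ≤ f t + f't * (c - t) := by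
  rcases lt_trichotomy c t with h | h | h
  · have h1 := hc.le_slope_of_hasDerivAt hcpos ht h hd
    rw [slope_def_field] at h1
    rw [le_div_iff₀ (by linarith)] at h1
    nlinarith
  · subst h; simp
  · have h1 := hc.slope_le_of_hasDerivAt ht hcpos h hd
    rw [slope_def_field] at h1
    rw [div_le_iff₀ (by linarith)] at h1
    nlinarith

theorem stmt11
    (m : ℕ) (hm : 1 ≤ m)
    (S : Fin m → ℝ) (hS : ∀ i, 0 < S i)
    (Ui : Fin m → ℝ → ℝ) (Ui' : Fin m → ℝ → ℝ)
    (hconc : ∀ i, StrictConcaveOn ℝ (Ioi 0) (Ui i))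
    (hmono : ∀ i, StrictMonoOn (Ui i) (Ioi 0))
    (hderiv : ∀ i, ∀ t ∈ Ioi (0 : ℝ), HasDerivAt (Ui i) (Ui' i t) t)
    (hcont : ∀ i, ContinuousOn (Ui' i) (Ioi 0))
    (hInada0 : ∀ i, Tendsto (Ui' i) (nhdsWithin 0 (Ioi 0)) atTop)
    (hInadaInf : ∀ i, Tendsto (Ui' i) atTop (nhds 0))
    (L : Fin m → EReal)
    (hL : ∀ i, Tendsto (fun t : ℝ => ((Ui i t : ℝ) : EReal)) (nhdsWithin 0 (Ioi 0)) (nhds (L i)))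
    (U : (Fin m → ℝ) → EReal)
    (hU : ∀ c : Fin m → ℝ, U c = ∑ i, (if 0 < c i then ((Ui i (c i) : ℝ) : EReal) else L i))
    (B : ℝ → Set (Fin m → ℝ))
    (hB : ∀ x : ℝ, B x = {c | (∀ i, 0 ≤ c i) ∧ ∑ k, S k * c k ≤ x})
    (Ustar : ℝ → EReal) (hUstar : ∀ x : ℝ, Ustar x = sSup (U '' B x)) :
    ∀ y : ℝ, 0 < y →
      sSup {r : ℝ | ∃ z : ℝ, 0 < z ∧ r = (Ustar z).toReal - z * y}
        = ∑ i, sSup {r : ℝ | ∃ c : ℝ, 0 < c ∧ r = Ui i c - c * (S i * y)} := by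
  intro y hy
  have hm' : 0 < m := hm
  have hmR : (0:ℝ) < (m:ℝ) := Nat.cast_pos.mpr hm'
  set V : Fin m → Set ℝ :=
    fun i => {r : ℝ | ∃ c : ℝ, 0 < c ∧ r = Ui i c - c * (S i * y)} with hVdef
  set A : Set ℝ := {r : ℝ | ∃ z : ℝ, 0 < z ∧ r = (Ustar z).toReal - z * y} with hAdef
  have hne : ∀ i, (V i).Nonempty := fun i => ⟨Ui i 1 - 1 * (S i * y), 1, one_pos, rfl⟩
  -- boundedness of each V i
  have hbdd : ∀ i, BddAbove (V i) := by
    intro i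
    have hp : 0 < S i * y := mul_pos (hS i) hy
    obtain ⟨t0, ht0lt, ht0pos⟩ :=
      (((hInadaInf i).eventually (gt_mem_nhds hp)).and (eventually_gt_atTop 0)).exists
    refine ⟨Ui i t0 - Ui' i t0 * t0, ?_⟩
    rintro r ⟨c, hc, rfl⟩
    have htan := tangent_le' (hconc i).concaveOn ht0pos hc (hderiv i t0 ht0pos)
    nlinarith [mul_pos hc (sub_pos.mpr ht0lt)]
  set v : Fin m → ℝ := fun i => sSup (V i) with hvdef
  have hvle : ∀ i, ∀ c : ℝ, 0 < c → Ui i c - c * (S i * y) ≤ v i :=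
    fun i c hc => le_csSup (hbdd i) ⟨c, hc, rfl⟩
  -- L i ≤ v i
  have hLle : ∀ i, L i ≤ ((v i : ℝ) : EReal) := by
    intro i
    have hg : Tendsto (fun t : ℝ => ((v i + t * (S i * y) : ℝ) : EReal))
        (nhdsWithin 0 (Ioi 0)) (nhds ((v i : ℝ) : EReal)) := by
      have hct : ContinuousAt (fun t : ℝ => ((v i + t * (S i * y) : ℝ) : EReal)) 0 :=
        (continuous_coe_real_ereal.comp (by continuity)).continuousAt
      simpa using hct.tendsto.mono_left (nhdsWithin_le_nhds (s := Ioi (0:ℝ)))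
    refine le_of_tendsto_of_tendsto (hL i) hg ?_
    filter_upwards [self_mem_nhdsWithin] with t ht
    exact EReal.coe_le_coe_iff.mpr (by have := hvle i t ht; linarith)
  -- upper bound for U on budget sets
  have hUB : ∀ z : ℝ, ∀ c : Fin m → ℝ, (∀ i, 0 ≤ c i) → (∑ k, S k * c k) ≤ z →
      U c ≤ (((∑ i, v i) + z * y : ℝ) : EReal) := by
    intro z c hnn hsum
    rw [hU]
    calc ∑ i, (if 0 < c i then ((Ui i (c i) : ℝ) : EReal) else L i)
        ≤ ∑ i, ((v i + c i * (S i * y) : ℝ) : EReal) := by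
          apply Finset.sum_le_sum
          intro i _
          by_cases h : 0 < c i
          · rw [if_pos h]
            exact EReal.coe_le_coe_iff.mpr (by have := hvle i (c i) h; linarith)
          · rw [if_neg h]
            have hc0 : c i = 0 := le_antisymm (not_lt.mp h) (hnn i)
            rw [hc0]
            simpa using hLle i
      _ = (((∑ i, (v i + c i * (S i * y))) : ℝ) : EReal) := (ereal_coe_sum' _ _).symm
      _ ≤ (((∑ i, v i) + z * y : ℝ) : EReal) := by
          apply EReal.coe_le_coe_iff.mpr
          have h1 : ∑ i, (v i + c i * (S i * y))
              = (∑ i, v i) + (∑ i, S i * c i) * y := by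
            rw [Finset.sum_add_distrib, Finset.sum_mul]
            congr 1
            exact Finset.sum_congr rfl fun i _ => by ring
          rw [h1]
          have h2 : (∑ i, S i * c i) * y ≤ z * y := mul_le_mul_of_nonneg_right hsum hy.le
          linarith
  have hUstar_ub : ∀ z : ℝ, Ustar z ≤ (((∑ i, v i) + z * y : ℝ) : EReal) := by
    intro z; rw [hUstar]
    apply sSup_le
    rintro a ⟨c, hc, rfl⟩
    rw [hB] at hc
    exact hUB z c hc.1 hc.2
  have hUstar_lb : ∀ z : ℝ, ∀ c : Fin m → ℝ, (∀ i, 0 < c i) → (∑ k, S k * c k) ≤ z →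
      (((∑ i, Ui i (c i)) : ℝ) : EReal) ≤ Ustar z := by
    intro z c hpos hsum
    rw [hUstar]
    have hmem : U c ∈ U '' B z := ⟨c, by rw [hB]; exact ⟨fun i => (hpos i).le, hsum⟩, rfl⟩
    have hUc : U c = (((∑ i, Ui i (c i)) : ℝ) : EReal) := by
      rw [hU, ereal_coe_sum']
      exact Finset.sum_congr rfl fun i _ => by rw [if_pos (hpos i)]
    exact hUc ▸ le_sSup hmem
  have hUstar_ne_top : ∀ z : ℝ, Ustar z ≠ ⊤ :=
    fun z => ne_top_of_le_ne_top (EReal.coe_ne_top _) (hUstar_ub z)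
  -- lower bound for toReal
  have htRlb : ∀ z : ℝ, ∀ c : Fin m → ℝ, (∀ i, 0 < c i) → (∑ k, S k * c k) ≤ z →
      (∑ i, Ui i (c i)) ≤ (Ustar z).toReal := by
    intro z c hpos hsum
    have := EReal.toReal_le_toReal (hUstar_lb z c hpos hsum) (EReal.coe_ne_bot _)
      (hUstar_ne_top z)
    simpa using this
  -- Ustar z is not ⊥ for z > 0; upper bound for toReal
  have htRub : ∀ z : ℝ, 0 < z → (Ustar z).toReal ≤ (∑ i, v i) + z * y := by
    intro z hz
    have hczpos : ∀ i, 0 < z / ((m:ℝ) * S i) :=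
      fun i => div_pos hz (mul_pos hmR (hS i))
    have hczsum : (∑ k, S k * (z / ((m:ℝ) * S k))) ≤ z := by
      have : ∀ k : Fin m, S k * (z / ((m:ℝ) * S k)) = z / (m:ℝ) := by
        intro k
        rw [mul_comm ((m:ℝ)) (S k), ← mul_div_assoc, mul_div_mul_left _ _ (hS k).ne']
      rw [Finset.sum_congr rfl fun k _ => this k, Finset.sum_const, Finset.card_univ,
        Fintype.card_fin, nsmul_eq_mul]
      rw [mul_div_cancel₀ z (ne_of_gt hmR)]
    have hlb := hUstar_lb z _ hczpos hczsum
    have hne_bot : Ustar z ≠ ⊥ := by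
      intro h
      rw [h] at hlb
      exact (EReal.coe_ne_bot _) (le_bot_iff.mp hlb)
    have := EReal.toReal_le_toReal (hUstar_ub z) hne_bot (EReal.coe_ne_top _)
    simpa only [EReal.toReal_coe] using this
  -- A is nonempty and bounded above
  have hAne : A.Nonempty := ⟨(Ustar 1).toReal - 1 * y, 1, one_pos, rfl⟩
  have hAub : ∀ r ∈ A, r ≤ ∑ i, v i := by
    rintro r ⟨z, hz, rfl⟩
    have := htRub z hz
    linarith
  have hAbdd : BddAbove A := ⟨∑ i, v i, hAub⟩
  refine le_antisymm (csSup_le hAne hAub) (le_of_forall_pos_le_add ?_)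
  intro ε hε
  have hεm : 0 < ε / (m:ℝ) := div_pos hε hmR
  have hch : ∀ i, ∃ c : ℝ, 0 < c ∧ v i - ε / (m:ℝ) < Ui i c - c * (S i * y) := by
    intro i
    obtain ⟨r, ⟨c, hc, rfl⟩, hr⟩ := exists_lt_of_lt_csSup (hne i) (sub_lt_self _ hεm)
    exact ⟨c, hc, hr⟩
  choose c hcpos hcval using hch
  set z : ℝ := ∑ k, S k * c k with hzdef
  have hz : 0 < z :=
    Finset.sum_pos (fun k _ => mul_pos (hS k) (hcpos k)) ⟨⟨0, hm'⟩, Finset.mem_univ _⟩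
  have hlow : (∑ i, Ui i (c i)) ≤ (Ustar z).toReal := htRlb z c hcpos le_rfl
  have hmemA : (Ustar z).toReal - z * y ∈ A := ⟨z, hz, rfl⟩
  have h1 : ∑ i, (v i - ε / (m:ℝ)) ≤ ∑ i, (Ui i (c i) - c i * (S i * y)) :=
    Finset.sum_le_sum fun i _ => (hcval i).le
  have h2 : ∑ i, (Ui i (c i) - c i * (S i * y)) = (∑ i, Ui i (c i)) - z * y := by
    rw [Finset.sum_sub_distrib]
    congr 1
    rw [hzdef, Finset.sum_mul]
    exact Finset.sum_congr rfl fun i _ => by ring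
  have h3 : ∑ i, (v i - ε / (m:ℝ)) = (∑ i, v i) - ε := by
    rw [Finset.sum_sub_distrib, Finset.sum_const, Finset.card_univ, Fintype.card_fin,
      nsmul_eq_mul, mul_div_cancel₀ ε (ne_of_gt hmR)]
  have h4 : (Ustar z).toReal - z * y ≤ sSup A := le_csSup hAbdd hmemA
  linarith
end
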